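/- If a ∈ Cl(V) lies in the subspace Cl²(V) spanned by products e_i e_j with i < j (image of so(V) under D), then for every integer k < d/2, the supertrace of a^k vanishes: Str(a^k) = 0. -/

import Mathlib

/- STATEMENT 4: if `a ∈ Cl²(V)` (the span of the monomials `e_i e_j`, `i < j`,
i.e. the image of `so(V)` under `D`), then for every `k < d/2` the supertrace of
`a^k` vanishes: `Str(a^k) = 0`.  The supertrace is taken in the spinor module `S`
(ℤ/2-graded, of complex dimension `2^{d/2}`, grading operator `ε` identified with
the chirality element `i^{d/2} e_1⋯e_d`). -/

noncomputable section

def Qneg (d : ℕ) : QuadraticForm ℝ (Fin d → ℝ) :=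
  QuadraticMap.weightedSumSquares ℝ (fun _ : Fin d => (-1 : ℝ))

def cmono {d : ℕ} (s : Finset (Fin d)) : CliffordAlgebra (Qneg d) :=
  ((s.sort (· ≤ ·)).map fun i => CliffordAlgebra.ι (Qneg d) (Pi.single i 1)).prod

/-- `Cl²(V)`: the span of the degree-two monomials `e_i e_j`, `i < j`. -/
def clTwo (d : ℕ) : Submodule ℝ (CliffordAlgebra (Qneg d)) :=
  Submodule.span ℝ {x | ∃ i j : Fin d, i < j ∧ x = cmono {i, j}}

def ee {d : ℕ} (i : Fin d) : CliffordAlgebra (Qneg d) :=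
  CliffordAlgebra.ι (Qneg d) (Pi.single i 1)

def lprod {d : ℕ} (l : List (Fin d)) : CliffordAlgebra (Qneg d) := (l.map ee).prod

lemma Qneg_single {d : ℕ} (i : Fin d) : Qneg d (Pi.single i 1) = -1 := by
  simp [Qneg, QuadraticMap.weightedSumSquares_apply]
  rw [Finset.sum_eq_single i] <;> simp +contextual [Pi.single_apply]

lemma ee_sq {d : ℕ} (i : Fin d) : ee i * ee i = -1 := by
  rw [ee, CliffordAlgebra.ι_sq_scalar, Qneg_single, map_neg, map_one]

lemma ee_anticomm {d : ℕ} {i j : Fin d} (h : i ≠ j) : ee i * ee j = -(ee j * ee i) := by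
  have : Qneg d (Pi.single i 1 + Pi.single j 1) = -2 := by
    simp [Qneg, QuadraticMap.weightedSumSquares_apply]
    rw [show ((2:ℝ)) = ∑ t : Fin d, ((if t = i then (1:ℝ) else 0) + (if t = j then (1:ℝ) else 0)) by
      simp [Finset.sum_add_distrib]; norm_num]
    refine Finset.sum_congr rfl fun t _ => ?_
    rcases eq_or_ne t i with rfl|hi <;> rcases eq_or_ne t j with rfl|hj <;>
      simp_all [Pi.single_apply]
  have hpol : QuadraticMap.polar (Qneg d) (Pi.single i 1) (Pi.single j 1) = 0 := by
    rw [QuadraticMap.polar, this, Qneg_single, Qneg_single]; ring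
  have := CliffordAlgebra.ι_mul_ι_add_swap (Q := Qneg d) (Pi.single i 1) (Pi.single j 1)
  rw [hpol, map_zero] at this
  have h2 : ee i * ee j + ee j * ee i = 0 := this
  rw [eq_neg_iff_add_eq_zero]; exact h2


@[simp] lemma lprod_nil {d : ℕ} : lprod ([] : List (Fin d)) = 1 := rfl
@[simp] lemma lprod_cons {d : ℕ} (i : Fin d) (l : List (Fin d)) :
    lprod (i :: l) = ee i * lprod l := by simp [lprod]
lemma lprod_append {d : ℕ} (l₁ l₂ : List (Fin d)) :
    lprod (l₁ ++ l₂) = lprod l₁ * lprod l₂ := by simp [lprod]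

lemma comm_not_mem {d : ℕ} (l : List (Fin d)) (j : Fin d) (hj : j ∉ l) :
    ee j * lprod l = ((-1 : ℝ) ^ l.length) • (lprod l * ee j) := by
  induction l with
  | nil => simp
  | cons a t ih =>
    have hja : j ≠ a := fun h => hj (h ▸ List.mem_cons_self)
    have hjt : j ∉ t := fun h => hj (List.mem_cons_of_mem a h)
    rw [lprod_cons, ← mul_assoc, ee_anticomm hja, neg_mul, mul_assoc, ih hjt]
    rw [List.length_cons, pow_succ]
    simp [mul_smul_comm, smul_mul_assoc, mul_assoc, smul_smul]

lemma comm_mem {d : ℕ} (l : List (Fin d)) (hl : l.Nodup) (j : Fin d) (hj : j ∈ l) :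
    ee j * lprod l = ((-1 : ℝ) ^ (l.length - 1)) • (lprod l * ee j) := by
  obtain ⟨l₁, l₂, rfl⟩ := List.append_of_mem hj
  have hnd := hl
  rw [List.nodup_append] at hnd
  have hj1 : j ∉ l₁ := fun h => hnd.2.2 j h j List.mem_cons_self rfl
  have hj2 : j ∉ l₂ := (List.nodup_cons.mp hnd.2.1).1
  have e1 := comm_not_mem l₁ j hj1
  have e2 := comm_not_mem l₂ j hj2
  have key : ∀ x y : CliffordAlgebra (Qneg d), x * (ee j * (ee j * y)) = -(x * y) := by
    intro x y; rw [← mul_assoc (ee j), ee_sq]; simp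
  have len : (l₁ ++ j :: l₂).length - 1 = l₁.length + l₂.length := by
    simp only [List.length_append, List.length_cons]; omega
  rw [len, lprod_append, lprod_cons]
  have LHS : ee j * (lprod l₁ * (ee j * lprod l₂))
      = ((-1:ℝ) ^ (l₁.length + 1)) • (lprod l₁ * lprod l₂) := by
    rw [← mul_assoc, e1, smul_mul_assoc, mul_assoc, key, pow_succ]
    rw [smul_neg, ← neg_smul]
    congr 1
    ring
  have e2' : lprod l₂ * ee j = ((-1:ℝ) ^ l₂.length) • (ee j * lprod l₂) := by
    rw [e2, smul_smul, ← pow_add, ← two_mul, pow_mul]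
    simp
  have RHS : lprod l₁ * (ee j * lprod l₂) * ee j
      = ((-1:ℝ) ^ (l₂.length + 1)) • (lprod l₁ * lprod l₂) := by
    rw [mul_assoc, mul_assoc, e2', mul_smul_comm, mul_smul_comm, key, pow_succ]
    rw [smul_neg, ← neg_smul]
    congr 1
    ring
  rw [LHS, RHS, smul_smul, ← pow_add]
  congr 1
  have h2 : l₁.length + l₂.length + (l₂.length + 1) = (l₁.length + 1) + 2 * l₂.length := by ring
  rw [h2, pow_add ((-1:ℝ)) (l₁.length+1) (2*l₂.length), pow_mul]
  simp


lemma cmono_eq {d : ℕ} (s : Finset (Fin d)) : cmono s = lprod (s.sort (· ≤ ·)) := rfl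

lemma lprod_sorted {d : ℕ} (l : List (Fin d)) (hl : l.Pairwise (· < ·)) :
    lprod l = cmono l.toFinset := by
  rw [cmono_eq, (List.toFinset_sort (· ≤ ·) hl.nodup).mpr (hl.imp le_of_lt)]

lemma step_list {d : ℕ} (l : List (Fin d)) (hl : l.Pairwise (· < ·)) (i : Fin d) :
    ∃ (c : ℝ) (l' : List (Fin d)), l'.Pairwise (· < ·) ∧
      l'.toFinset = symmDiff {i} l.toFinset ∧ ee i * lprod l = c • lprod l' := by
  induction l with
  | nil =>
    refine ⟨1, [i], by simp, ?_, by simp⟩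
    ext x; simp [Finset.mem_symmDiff]
  | cons a t ih =>
    rw [List.pairwise_cons] at hl
    obtain ⟨ha, ht⟩ := hl
    have hat : a ∉ t := fun h => lt_irrefl a (ha a h)
    rcases lt_trichotomy i a with hia | rfl | hai
    · refine ⟨1, i :: a :: t, ?_, ?_, by simp⟩
      · rw [List.pairwise_cons]
        refine ⟨fun b hb => ?_, List.pairwise_cons.mpr ⟨ha, ht⟩⟩
        rcases List.mem_cons.mp hb with rfl | h
        · exact hia
        · exact hia.trans (ha b h)
      · have hit : i ∉ t := fun h => lt_irrefl i (hia.trans (ha i h))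
        have hia' : i ≠ a := ne_of_lt hia
        clear ih
        ext x
        simp only [List.toFinset_cons, Finset.mem_insert, Finset.mem_symmDiff,
          Finset.mem_singleton, List.mem_toFinset]
        by_cases hxi : x = i <;> by_cases hxa : x = a <;> by_cases hxt : x ∈ t <;>
          simp_all
    · refine ⟨-1, t, ht, ?_, ?_⟩
      · clear ih
        ext x
        simp only [List.toFinset_cons, Finset.mem_insert, Finset.mem_symmDiff,
          Finset.mem_singleton, List.mem_toFinset]
        by_cases hxa : x = i <;> by_cases hxt : x ∈ t <;> simp_all
      · rw [lprod_cons, ← mul_assoc, ee_sq]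
        simp
    · obtain ⟨c, t', ht', htf, heq⟩ := ih ht
      have hai' : a ≠ i := ne_of_lt hai
      refine ⟨-c, a :: t', ?_, ?_, ?_⟩
      · rw [List.pairwise_cons]
        refine ⟨fun b hb => ?_, ht'⟩
        have hb' : b ∈ t'.toFinset := List.mem_toFinset.mpr hb
        rw [htf, Finset.mem_symmDiff] at hb'
        rcases hb' with ⟨h1, _⟩ | ⟨h1, _⟩
        · exact (Finset.mem_singleton.mp h1) ▸ hai
        · exact ha b (List.mem_toFinset.mp h1)
      · clear heq ih
        ext x
        simp only [List.toFinset_cons, Finset.mem_insert, htf, Finset.mem_symmDiff,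
          Finset.mem_singleton, List.mem_toFinset]
        by_cases hxi : x = i <;> by_cases hxa : x = a <;> by_cases hxt : x ∈ t <;>
          simp_all
      · rw [lprod_cons, ← mul_assoc, ee_anticomm hai'.symm, neg_mul, mul_assoc, heq,
          lprod_cons, mul_smul_comm, neg_smul]

lemma step_finset {d : ℕ} (U : Finset (Fin d)) (i : Fin d) :
    ∃ c : ℝ, ee i * cmono U = c • cmono (symmDiff {i} U) := by
  obtain ⟨c, l', hs, htf, heq⟩ := step_list (U.sort (· ≤ ·)) (Finset.sortedLT_sort U).pairwise i
  refine ⟨c, ?_⟩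
  rw [cmono_eq, heq, lprod_sorted l' hs, htf, Finset.sort_toFinset]

lemma mul_cmono_list {d : ℕ} (l : List (Fin d)) (hl : l.Nodup) (T : Finset (Fin d)) :
    ∃ c : ℝ, lprod l * cmono T = c • cmono (symmDiff l.toFinset T) := by
  induction l with
  | nil =>
    refine ⟨1, ?_⟩
    have : symmDiff (∅ : Finset (Fin d)) T = T := by
      ext x; simp [Finset.mem_symmDiff]
    simp [this]
  | cons a t ih =>
    have hnd := List.nodup_cons.mp hl
    obtain ⟨c, hc⟩ := ih hnd.2
    obtain ⟨c', hc'⟩ := step_finset (symmDiff t.toFinset T) a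
    refine ⟨c * c', ?_⟩
    rw [lprod_cons, mul_assoc, hc, mul_smul_comm, hc', smul_smul]
    congr 2
    rw [List.toFinset_cons, ← symmDiff_assoc]
    congr 1
    ext x
    simp only [Finset.mem_symmDiff, Finset.mem_singleton, Finset.mem_insert, List.mem_toFinset]
    have hat : a ∉ t := hnd.1
    by_cases hxa : x = a <;> by_cases hxt : x ∈ t <;> simp_all

lemma cmono_mul_cmono {d : ℕ} (S T : Finset (Fin d)) :
    ∃ c : ℝ, cmono S * cmono T = c • cmono (symmDiff S T) := by
  obtain ⟨c, hc⟩ := mul_cmono_list (S.sort (· ≤ ·)) (Finset.sort_nodup _ _) T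
  refine ⟨c, ?_⟩
  rw [cmono_eq, hc, Finset.sort_toFinset]

lemma exists_anticomm {d : ℕ} (hd : Even d) (U : Finset (Fin d)) (hU : U.Nonempty) :
    ∃ j : Fin d, ee j * cmono U = -(cmono U * ee j) := by
  by_cases hpar : Even U.card
  · obtain ⟨j, hj⟩ := hU
    refine ⟨j, ?_⟩
    have hmem : j ∈ U.sort (· ≤ ·) := (Finset.mem_sort _).mpr hj
    have := comm_mem (U.sort (· ≤ ·)) (Finset.sort_nodup _ _) j hmem
    rw [Finset.length_sort] at this
    rw [cmono_eq, this]
    have hodd : Odd (U.card - 1) := by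
      rcases hpar with ⟨r, hr⟩
      have : 1 ≤ U.card := Finset.card_pos.mpr ⟨j, hj⟩
      refine ⟨r - 1, by omega⟩
    rw [hodd.neg_one_pow, neg_one_smul]
  · have hlt : U.card < d := by
      have hle : U.card ≤ d := by simpa using Finset.card_le_card (Finset.subset_univ U)
      rcases hle.lt_or_eq with h | h
      · exact h
      · exact absurd (by rw [h]; exact hd) hpar
    have : Uᶜ.Nonempty := by
      rw [← Finset.card_pos, Finset.card_compl]
      simpa using hlt
    obtain ⟨j, hj⟩ := this
    have hjU : j ∉ U := Finset.mem_compl.mp hj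
    refine ⟨j, ?_⟩
    have hmem : j ∉ U.sort (· ≤ ·) := fun h => hjU ((Finset.mem_sort _).mp h)
    have := comm_not_mem (U.sort (· ≤ ·)) j hmem
    rw [Finset.length_sort] at this
    rw [cmono_eq, this, (Nat.not_even_iff_odd.mp hpar).neg_one_pow, neg_one_smul]

lemma trace_conj {S : Type} [AddCommGroup S] [Module ℂ S] [Module.Finite ℂ S]
    (A B : Module.End ℂ S) (h1 : B * A = -(A * B)) (h2 : B * B = -1) :
    LinearMap.trace ℂ S A = 0 := by
  have hBAB : B * (A * B) = A := by
    rw [← mul_assoc, h1, neg_mul, mul_assoc, h2, mul_neg_one, neg_neg]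
  have key : LinearMap.trace ℂ S A = - LinearMap.trace ℂ S A := by
    conv_lhs => rw [← hBAB]
    rw [LinearMap.trace_mul_comm, mul_assoc, h2, mul_neg_one, map_neg]
  have h : (2 : ℂ) * LinearMap.trace ℂ S A = 0 := by
    have := sub_eq_zero.mpr key.symm
    rw [show -(LinearMap.trace ℂ S A) - LinearMap.trace ℂ S A
        = -(2 * LinearMap.trace ℂ S A) by ring] at this
    exact neg_eq_zero.mp this
  exact (mul_eq_zero.mp h).resolve_left two_ne_zero

lemma trace_rho_cmono {d : ℕ} (hd : Even d) {S : Type} [AddCommGroup S] [Module ℂ S]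
    [FiniteDimensional ℂ S] (ρ : CliffordAlgebra (Qneg d) →ₐ[ℝ] Module.End ℂ S)
    (U : Finset (Fin d)) (hU : U.Nonempty) :
    LinearMap.trace ℂ S (ρ (cmono U)) = 0 := by
  obtain ⟨j, hj⟩ := exists_anticomm hd U hU
  refine trace_conj (ρ (cmono U)) (ρ (ee j)) ?_ ?_
  · rw [← map_mul, ← map_mul, hj, map_neg]
  · rw [← map_mul, ee_sq, map_neg, map_one]

lemma univ_symmDiff {d : ℕ} (T : Finset (Fin d)) :
    symmDiff (Finset.univ : Finset (Fin d)) T = Tᶜ := by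
  ext x; simp [Finset.mem_symmDiff]

def Mspan (d n : ℕ) : Submodule ℝ (CliffordAlgebra (Qneg d)) :=
  Submodule.span ℝ {x | ∃ T : Finset (Fin d), T.card ≤ n ∧ x = cmono T}

lemma Mspan_mul {d p q : ℕ} {x y : CliffordAlgebra (Qneg d)}
    (hx : x ∈ Mspan d p) (hy : y ∈ Mspan d q) : x * y ∈ Mspan d (p + q) := by
  induction hx using Submodule.span_induction with
  | mem x hxg =>
    induction hy using Submodule.span_induction with
    | mem y hyg =>
      obtain ⟨Sx, hSx, rfl⟩ := hxg
      obtain ⟨Sy, hSy, rfl⟩ := hyg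
      obtain ⟨c, hc⟩ := cmono_mul_cmono Sx Sy
      rw [hc]
      refine Submodule.smul_mem _ _ (Submodule.subset_span ⟨symmDiff Sx Sy, ?_, rfl⟩)
      calc (symmDiff Sx Sy).card ≤ (Sx ∪ Sy).card :=
            Finset.card_le_card (symmDiff_le_sup (a := Sx) (b := Sy))
        _ ≤ Sx.card + Sy.card := Finset.card_union_le _ _
        _ ≤ p + q := Nat.add_le_add hSx hSy
    | zero => simp
    | add y z hy hz hy' hz' => rw [mul_add]; exact Submodule.add_mem _ hy' hz'
    | smul c y hy hy' => rw [mul_smul_comm]; exact Submodule.smul_mem _ _ hy'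
  | zero => simp
  | add x z hx hz hx' hz' => rw [add_mul]; exact Submodule.add_mem _ hx' hz'
  | smul c x hx hx' => rw [smul_mul_assoc]; exact Submodule.smul_mem _ _ hx'

lemma cmono_empty {d : ℕ} : cmono (∅ : Finset (Fin d)) = 1 := by simp [cmono]

lemma Mspan_pow {d : ℕ} {a : CliffordAlgebra (Qneg d)} (ha : a ∈ Mspan d 2) (k : ℕ) :
    a ^ k ∈ Mspan d (2 * k) := by
  induction k with
  | zero =>
    rw [pow_zero]
    exact Submodule.subset_span ⟨∅, by simp, cmono_empty.symm⟩
  | succ n ih =>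
    rw [pow_succ, show 2 * (n + 1) = 2 * n + 2 by ring]
    exact Mspan_mul ih ha


lemma clTwo_le_Mspan {d : ℕ} : clTwo d ≤ Mspan d 2 := by
  apply Submodule.span_mono
  rintro x ⟨i, j, hij, rfl⟩
  exact ⟨{i, j}, by rw [Finset.card_pair (ne_of_lt hij)], rfl⟩

theorem statement4 (d m : ℕ) (hd : d = 2 * m) (hm : 0 < m)
    (S : Type) [AddCommGroup S] [Module ℂ S] [FiniteDimensional ℂ S]
    (hdim : Module.finrank ℂ S = 2 ^ m)
    (Sp Sm : Submodule ℂ S) (hcompl : IsCompl Sp Sm)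
    (ρ : CliffordAlgebra (Qneg d) →ₐ[ℝ] Module.End ℂ S)
    (ε : Module.End ℂ S)
    (hεp : ∀ x ∈ Sp, ε x = x) (hεm : ∀ x ∈ Sm, ε x = -x)
    (hchir : ε = (Complex.I ^ m) • ρ (cmono Finset.univ)) :
    ∀ a : CliffordAlgebra (Qneg d), a ∈ clTwo d →
      ∀ k : ℕ, k < m →
        LinearMap.trace ℂ S (ε * ρ (a ^ k)) = 0 := by
  intro a ha k hk
  have hde : Even d := ⟨m, by omega⟩
  -- supertrace of a small monomial vanishes
  have hstr : ∀ T : Finset (Fin d), T ≠ Finset.univ →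
      LinearMap.trace ℂ S (ε * ρ (cmono T)) = 0 := by
    intro T hT
    rw [hchir, smul_mul_assoc, ← map_mul]
    obtain ⟨c, hc⟩ := cmono_mul_cmono Finset.univ T
    rw [hc, univ_symmDiff, map_smul]
    have hTc : Tᶜ.Nonempty := by
      rw [← Finset.card_pos, Finset.card_compl]
      have : T.card < Fintype.card (Fin d) := by
        rcases (Finset.card_le_card (Finset.subset_univ T)).lt_or_eq with h | h
        · simpa using h
        · exact absurd (Finset.card_eq_iff_eq_univ T |>.mp (by simpa using h)) hT
      omega
    rw [show ρ (c • cmono Tᶜ) = c • ρ (cmono Tᶜ) from map_smul ρ c _,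
      LinearMap.map_smul_of_tower, trace_rho_cmono hde ρ Tᶜ hTc]
    simp
  -- a^k lies in the span of small monomials
  have hak : a ^ k ∈ Mspan d (2 * k) := Mspan_pow (clTwo_le_Mspan ha) k
  -- conclude by span induction
  have key : ∀ x ∈ Mspan d (2 * k), LinearMap.trace ℂ S (ε * ρ x) = 0 := by
    intro x hx
    induction hx using Submodule.span_induction with
    | mem x hxg =>
      obtain ⟨T, hTcard, rfl⟩ := hxg
      refine hstr T fun hTu => ?_
      rw [hTu] at hTcard
      simp only [Finset.card_univ, Fintype.card_fin] at hTcard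
      omega
    | zero => simp
    | add x y hx hy hx' hy' => rw [map_add, mul_add, map_add, hx', hy', add_zero]
    | smul c x hx hx' =>
      rw [map_smul, mul_smul_comm, LinearMap.map_smul_of_tower, hx', smul_zero]
  exact key _ hak

end
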